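/- Let r ∈ ℝ and let g : [r,∞) → ℝ_{>0} be decreasing and continuously differentiable with −g'(x) ≤ K·g(x)/x for some constant K. Let A : [r,∞) → ℝ satisfy A(x) = c·x + o(x) for some c > 0, and suppose A is the partial-sum function of a nonnegative arithmetic sequence a_m (A(X) = ∑_{r ≤ m ≤ X} a_m). Then ∑_{r ≤ m ≤ X} a_m·g(m) = c·∫_r^X g(t)dt + o(∫_r^X g(t)dt) + O(1) as X → ∞. -/

import Mathlib

/-!
With `E t = A t - c t`, Abel summation against `A` and integration by parts against `c t` give
`∑ a_m g(m) - c ∫_{x₀}^X g = const + E(X) g(X) - ∫_{x₀}^X g' E`.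
For every `δ > 0` one has `|E t| ≤ C_δ + δ t`; since `g' ≤ 0`, `-t g'(t) ≤ K g(t)` and
`X g(X) ≤ x₀ g(x₀) + ∫_{x₀}^X g`, the right-hand side is bounded in absolute value by
`C'_δ + δ (1 + K) ∫_{x₀}^X g`. So the difference `∑ a_m g(m) - c ∫_r^X g` is `O(1)` when
`∫_r^X g` stays bounded and `o(∫_r^X g)` when it tends to infinity.
-/

open Filter Set MeasureTheory Asymptotics

theorem HasDerivAt.nonpos_of_antitoneOn_Ici {g : ℝ → ℝ} {g' r x : ℝ} (hx : r ≤ x)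
    (hd : HasDerivAt g g' x) (hg : AntitoneOn g (Ici r)) : g' ≤ 0 := by
  refine hd.hasDerivWithinAt.nonpos_of_antitoneOn ?_ hg
  rw [accPt_principal_iff_nhdsWithin]
  exact (nhdsGT_neBot x).mono <|
    nhdsWithin_mono _ fun y hy => ⟨hx.trans (le_of_lt hy), ne_of_gt hy⟩

theorem monotoneOn_intervalIntegral_of_nonneg {g : ℝ → ℝ} {r : ℝ} (hg : ContinuousOn g (Ici r))
    (hg_nonneg : ∀ x ∈ Ici r, 0 ≤ g x) : MonotoneOn (fun X => ∫ t in r..X, g t) (Ici r) :=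
  fun _ hx _ _ hxy => intervalIntegral.integral_mono_interval le_rfl hx hxy
    ((ae_restrict_iff' measurableSet_Ioc).2 (ae_of_all _ fun t ht => hg_nonneg t ht.1.le))
    ((hg.mono Icc_subset_Ici_self).intervalIntegrable_of_Icc (le_trans hx hxy))

section IntervalEstimates

variable {g g' : ℝ → ℝ} {x X : ℝ}

theorem integral_eq_mul_sub_mul_sub_integral_mul_deriv (hxX : x ≤ X)
    (hderiv : ∀ t ∈ Icc x X, HasDerivAt g (g' t) t) (hg' : ContinuousOn g' (Icc x X)) :
    ∫ t in x..X, g t = X * g X - x * g x - ∫ t in x..X, t * g' t := by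
  rw [← uIcc_of_le hxX] at hderiv
  have hparts := intervalIntegral.integral_mul_deriv_eq_deriv_mul
    (fun t _ => hasDerivAt_id t) hderiv intervalIntegrable_const
    (hg'.intervalIntegrable_of_Icc hxX)
  simp only [id, one_mul] at hparts
  linarith

theorem mul_le_mul_add_integral_of_deriv_nonpos (hx : 0 ≤ x) (hxX : x ≤ X)
    (hderiv : ∀ t ∈ Icc x X, HasDerivAt g (g' t) t) (hg' : ContinuousOn g' (Icc x X))
    (hg'_nonpos : ∀ t ∈ Ioc x X, g' t ≤ 0) :
    X * g X ≤ x * g x + ∫ t in x..X, g t := by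
  have hnonpos : ∫ t in x..X, t * g' t ≤ 0 := by
    rw [intervalIntegral.integral_of_le hxX]
    exact setIntegral_nonpos measurableSet_Ioc fun t ht =>
      mul_nonpos_of_nonneg_of_nonpos (hx.trans ht.1.le) (hg'_nonpos t ht)
  linarith [integral_eq_mul_sub_mul_sub_integral_mul_deriv hxX hderiv hg']

theorem abs_mul_sub_integral_deriv_mul_le {E : ℝ → ℝ} {K C δ : ℝ} (hx : 0 ≤ x) (hxX : x ≤ X)
    (hδ : 0 ≤ δ) (hderiv : ∀ t ∈ Icc x X, HasDerivAt g (g' t) t)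
    (hg' : ContinuousOn g' (Icc x X)) (hgX : 0 ≤ g X) (hg'_nonpos : ∀ t ∈ Ioc x X, g' t ≤ 0)
    (hg'_le : ∀ t ∈ Ioc x X, -g' t * t ≤ K * g t) (hE : ∀ t ∈ Icc x X, |E t| ≤ C + δ * t) :
    |E X * g X - ∫ t in Ioc x X, g' t * E t| ≤
      (C + δ * x) * g x + δ * (1 + K) * ∫ t in x..X, g t := by
  have hg : ContinuousOn g (Icc x X) := HasDerivAt.continuousOn hderiv
  have hpointwise : ∀ t ∈ Ioc x X, |g' t * E t| ≤ C * -g' t + δ * K * g t := fun t ht =>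
    calc |g' t * E t| = -g' t * |E t| := by rw [abs_mul, abs_of_nonpos (hg'_nonpos t ht)]
      _ ≤ -g' t * (C + δ * t) :=
        mul_le_mul_of_nonneg_left (hE t (Ioc_subset_Icc_self ht)) (neg_nonneg.2 (hg'_nonpos t ht))
      _ = C * -g' t + δ * (-g' t * t) := by ring
      _ ≤ C * -g' t + δ * K * g t := by nlinarith [hg'_le t ht]
  have hmajorant : ∫ t in Ioc x X, (C * -g' t + δ * K * g t) =
      C * (g x - g X) + δ * K * ∫ t in x..X, g t := by
    have hg'i := hg'.intervalIntegrable_of_Icc (μ := volume) hxX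
    have hi₁ : IntervalIntegrable (fun t => C * -g' t) volume x X := hg'i.neg.const_mul C
    have hi₂ : IntervalIntegrable (fun t => δ * K * g t) volume x X :=
      (hg.intervalIntegrable_of_Icc hxX).const_mul _
    rw [← intervalIntegral.integral_of_le hxX, intervalIntegral.integral_add hi₁ hi₂,
      intervalIntegral.integral_const_mul, intervalIntegral.integral_neg,
      intervalIntegral.integral_const_mul, intervalIntegral.integral_eq_sub_of_hasDerivAt
        (fun t ht => hderiv t (uIcc_of_le hxX ▸ ht)) hg'i]
    ring
  have hintegral :
      ∫ t in Ioc x X, |g' t * E t| ≤ C * (g x - g X) + δ * K * ∫ t in x..X, g t := by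
    rw [← hmajorant]
    refine integral_mono_of_nonneg (ae_of_all _ fun t => abs_nonneg _) ?_
      ((ae_restrict_iff' measurableSet_Ioc).2 (ae_of_all _ hpointwise))
    exact (((hg'.neg.const_smul C).add (hg.const_smul (δ * K))).integrableOn_Icc).mono_set
      Ioc_subset_Icc_self
  have hXg := mul_le_mul_add_integral_of_deriv_nonpos hx hxX hderiv hg' hg'_nonpos
  calc |E X * g X - ∫ t in Ioc x X, g' t * E t|
      ≤ |E X| * g X + ∫ t in Ioc x X, |g' t * E t| := by
        refine (abs_sub _ _).trans (add_le_add (by rw [abs_mul, abs_of_nonneg hgX]) ?_)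
        simpa only [Real.norm_eq_abs] using norm_integral_le_integral_norm (fun t => g' t * E t)
    _ ≤ (C + δ * X) * g X + (C * (g x - g X) + δ * K * ∫ t in x..X, g t) :=
        add_le_add (mul_le_mul_of_nonneg_right (hE X ⟨hxX, le_rfl⟩) hgX) hintegral
    _ ≤ (C + δ * x) * g x + δ * (1 + K) * ∫ t in x..X, g t := by
        linarith [mul_le_mul_of_nonneg_left hXg hδ]

end IntervalEstimates

theorem Finset.sum_Icc_eq_sum_Icc_zero_ite {M : Type*} [AddCommMonoid M] (f : ℕ → M)
    (n₀ n : ℕ) :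
    ∑ m ∈ Finset.Icc n₀ n, f m = ∑ m ∈ Finset.Icc 0 n, if n₀ ≤ m then f m else 0 := by
  rw [← Finset.sum_filter]
  congr 1
  ext m
  simp only [Finset.mem_Icc, Finset.mem_filter]
  omega

section AbelSummation

variable (a : ℕ → ℝ) (n₀ : ℕ) {A g g' : ℝ → ℝ} {x X : ℝ}

theorem sum_Icc_mul_eq_add_sub_sub_integral_mul (hA : ∀ t, A t = ∑ m ∈ Finset.Icc n₀ ⌊t⌋₊, a m)
    (hx : 0 ≤ x) (hxX : x ≤ X) (hderiv : ∀ t ∈ Icc x X, HasDerivAt g (g' t) t)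
    (hg' : ContinuousOn g' (Icc x X)) :
    ∑ m ∈ Finset.Icc n₀ ⌊X⌋₊, a m * g m =
      ∑ m ∈ Finset.Icc n₀ ⌊x⌋₊, a m * g m + (A X * g X - A x * g x) -
        ∫ t in Ioc x X, g' t * A t := by
  set a' : ℕ → ℝ := fun m => if n₀ ≤ m then a m else 0
  have hA' : ∀ t, A t = ∑ m ∈ Finset.Icc 0 ⌊t⌋₊, a' m := fun t => by
    rw [hA, Finset.sum_Icc_eq_sum_Icc_zero_ite]
  have hsplit : ∑ m ∈ Finset.Icc n₀ ⌊X⌋₊, a m * g m =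
      ∑ m ∈ Finset.Icc n₀ ⌊x⌋₊, a m * g m + ∑ m ∈ Finset.Ioc ⌊x⌋₊ ⌊X⌋₊, g m * a' m := by
    simp only [Finset.sum_Icc_eq_sum_Icc_zero_ite _ n₀, ← Nat.range_succ_eq_Icc_zero,
      ← Finset.Ico_add_one_add_one_eq_Ioc, a', ite_mul, zero_mul, mul_comm (g _)]
    exact (Finset.sum_range_add_sum_Ico _ (by gcongr)).symm
  have hderiv_eq : ∀ t ∈ Icc x X, deriv g t = g' t := fun t ht => (hderiv t ht).deriv
  have habel := sum_mul_eq_sub_sub_integral_mul a' hx hxX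
    (fun t ht => (hderiv t ht).differentiableAt)
    (hg'.integrableOn_Icc.congr_fun (fun t ht => (hderiv_eq t ht).symm) measurableSet_Icc)
  rw [hsplit, habel, ← hA', ← hA', setIntegral_congr_fun measurableSet_Ioc
    (fun t ht => by rw [hderiv_eq t (Ioc_subset_Icc_self ht), ← hA'])]
  ring

theorem sum_Icc_mul_sub_mul_integral_eq (c : ℝ) (hA : ∀ t, A t = ∑ m ∈ Finset.Icc n₀ ⌊t⌋₊, a m)
    (hx : 0 ≤ x) (hxX : x ≤ X) (hderiv : ∀ t ∈ Icc x X, HasDerivAt g (g' t) t)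
    (hg' : ContinuousOn g' (Icc x X)) :
    ∑ m ∈ Finset.Icc n₀ ⌊X⌋₊, a m * g m - c * ∫ t in x..X, g t =
      ∑ m ∈ Finset.Icc n₀ ⌊x⌋₊, a m * g m - (A x - c * x) * g x +
        ((A X - c * X) * g X - ∫ t in Ioc x X, g' t * (A t - c * t)) := by
  have hg'A : IntegrableOn (fun t => g' t * A t) (Ioc x X) := by
    simp only [hA]
    exact (integrableOn_mul_sum_Icc a hx hg'.integrableOn_Icc).mono_set Ioc_subset_Icc_self
  have hg'id : IntegrableOn (fun t => c * (t * g' t)) (Ioc x X) :=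
    ((continuousOn_id.mul hg').integrableOn_Icc.mono_set Ioc_subset_Icc_self).const_mul c
  have hsub : ∫ t in Ioc x X, g' t * (A t - c * t) =
      (∫ t in Ioc x X, g' t * A t) - c * ∫ t in Ioc x X, t * g' t :=
    calc ∫ t in Ioc x X, g' t * (A t - c * t)
        = ∫ t in Ioc x X, (g' t * A t - c * (t * g' t)) := by congr 1 with t; ring
      _ = _ := by rw [integral_sub hg'A hg'id, integral_const_mul]
  rw [sum_Icc_mul_eq_add_sub_sub_integral_mul a n₀ hA hx hxX hderiv hg', hsub,
    integral_eq_mul_sub_mul_sub_integral_mul_deriv hxX hderiv hg',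
    intervalIntegral.integral_of_le hxX]
  ring

end AbelSummation

theorem MonotoneOn.tendsto_atTop_or_exists_eventually_le {α β : Type*} [Preorder α]
    [LinearOrder β] {f : α → β} {r : α} (hf : MonotoneOn f (Ici r)) :
    Tendsto f atTop atTop ∨ ∃ L, ∀ᶠ x in atTop, f x ≤ L := by
  by_cases hbdd : ∃ L, ∀ x ∈ Ici r, f x ≤ L
  · obtain ⟨L, hL⟩ := hbdd
    exact Or.inr ⟨L, (eventually_ge_atTop r).mono hL⟩
  · push Not at hbdd
    refine Or.inl (tendsto_atTop.2 fun b => ?_)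
    obtain ⟨x, hx, hbx⟩ := hbdd b
    filter_upwards [eventually_ge_atTop x] with y hy
    exact hbx.le.trans (hf hx (mem_Ici.2 (le_trans hx hy)) hy)

theorem isLittleO_of_forall_abs_le_mul_add {α : Type*} {l : Filter α} {f I : α → ℝ}
    (hI : Tendsto I l atTop) (h : ∀ ε > 0, ∃ C, ∀ᶠ x in l, |f x| ≤ ε * I x + C) :
    f =o[l] I := by
  refine isLittleO_iff.2 fun ε hε => ?_
  obtain ⟨C, hC⟩ := h (ε / 2) (half_pos hε)
  filter_upwards [hC, hI.eventually_ge_atTop 0, hI.eventually_ge_atTop (2 * C / ε)]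
    with x hfx hIx hCx
  rw [Real.norm_eq_abs, Real.norm_eq_abs, abs_of_nonneg hIx]
  have : 2 * C ≤ ε * I x := by rwa [div_le_iff₀' hε] at hCx
  linarith

theorem exists_isLittleO_add_isBigO_one {r : ℝ} {f I : ℝ → ℝ} (hI : MonotoneOn I (Ici r))
    (h : ∀ ε > 0, ∃ C, ∀ᶠ x in atTop, |f x| ≤ ε * I x + C) :
    ∃ e₁ e₂ : ℝ → ℝ, (∀ x, f x = e₁ x + e₂ x) ∧ e₁ =o[atTop] I ∧
      e₂ =O[atTop] fun _ => (1 : ℝ) := by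
  rcases hI.tendsto_atTop_or_exists_eventually_le with hI | ⟨L, hL⟩
  · exact ⟨f, 0, fun x => (add_zero _).symm, isLittleO_of_forall_abs_le_mul_add hI h,
      isBigO_zero _ _⟩
  · obtain ⟨C, hC⟩ := h 1 one_pos
    refine ⟨0, f, fun x => (zero_add _).symm, isLittleO_zero _ _,
      (isBigO_one_iff ℝ).2 ⟨L + C, eventually_map.2 ?_⟩⟩
    filter_upwards [hC, hL] with x hfx hIx
    rw [Real.norm_eq_abs]
    linarith

theorem exists_abs_le_add_mul_of_isLittleO {E : ℝ → ℝ} (hE : E =o[atTop] fun t => t)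
    (hbdd : ∀ q, ∃ M, ∀ t ∈ Icc 0 q, |E t| ≤ M) {δ : ℝ} (hδ : 0 < δ) :
    ∃ C, ∀ t, 0 ≤ t → |E t| ≤ C + δ * t := by
  obtain ⟨T, hT⟩ := eventually_atTop.1 (hE.def hδ)
  obtain ⟨M, hM⟩ := hbdd T
  refine ⟨max M 0, fun t ht => ?_⟩
  rcases le_total t T with htT | hTt
  · nlinarith [hM t ⟨ht, htT⟩, le_max_left M 0]
  · have hEt := hT t hTt
    rw [Real.norm_eq_abs, Real.norm_eq_abs, abs_of_nonneg ht] at hEt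
    linarith [le_max_right M 0]

theorem abs_sum_Icc_floor_sub_mul_le (a : ℕ → ℝ) (n₀ : ℕ) (c : ℝ) {t q : ℝ} (ht : t ∈ Icc 0 q) :
    |∑ m ∈ Finset.Icc n₀ ⌊t⌋₊, a m - c * t| ≤ ∑ m ∈ Finset.Icc n₀ ⌊q⌋₊, |a m| + |c| * q := by
  have hsum : |∑ m ∈ Finset.Icc n₀ ⌊t⌋₊, a m| ≤ ∑ m ∈ Finset.Icc n₀ ⌊q⌋₊, |a m| :=
    (Finset.abs_sum_le_sum_abs _ _).trans <| Finset.sum_le_sum_of_subset_of_nonneg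
      (Finset.Icc_subset_Icc le_rfl (Nat.floor_mono ht.2)) fun _ _ _ => abs_nonneg _
  have hct : |c * t| ≤ |c| * q := by
    rw [abs_mul, abs_of_nonneg ht.1]
    exact mul_le_mul_of_nonneg_left ht.2 (abs_nonneg c)
  exact (abs_sub _ _).trans (add_le_add hsum hct)

theorem exists_abs_sum_mul_sub_mul_integral_le {r K c : ℝ} {g g' : ℝ → ℝ} (a : ℕ → ℝ) (n₀ : ℕ)
    {A : ℝ → ℝ} (hg_nonneg : ∀ x ∈ Ici r, 0 ≤ g x) (hg_anti : AntitoneOn g (Ici r))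
    (hderiv : ∀ x ∈ Ici r, HasDerivAt g (g' x) x) (hg' : ContinuousOn g' (Ici r))
    (hg'_le : ∀ x ∈ Ici r, -g' x ≤ K * g x / x)
    (hA : ∀ X, A X = ∑ m ∈ Finset.Icc n₀ ⌊X⌋₊, a m)
    (hA_asymp : (fun X => A X - c * X) =o[atTop] fun X => X) {ε : ℝ} (hε : 0 < ε) :
    ∃ C, ∀ X ≥ max r 0, |∑ m ∈ Finset.Icc n₀ ⌊X⌋₊, a m * g m - c * ∫ t in r..X, g t| ≤
      ε * (∫ t in r..X, g t) + C := by
  set x₀ := max r 0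
  have hx₀ : 0 ≤ x₀ := le_max_right r 0
  have hrx₀ : r ≤ x₀ := le_max_left r 0
  have hEbdd : ∀ q, ∃ M, ∀ t ∈ Icc 0 q, |A t - c * t| ≤ M := fun q =>
    ⟨_, fun t ht => hA t ▸ abs_sum_Icc_floor_sub_mul_le a n₀ c ht⟩
  set δ := ε / (1 + |K|)
  have hδ : 0 < δ := div_pos hε (by positivity)
  have hδK : δ * (1 + K) ≤ ε := by
    rw [div_mul_eq_mul_div, div_le_iff₀ (by positivity)]
    nlinarith [le_abs_self K]
  obtain ⟨C, hC⟩ := exists_abs_le_add_mul_of_isLittleO hA_asymp hEbdd hδ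
  set I := fun X : ℝ => ∫ t in r..X, g t
  set T := fun X : ℝ => ∑ m ∈ Finset.Icc n₀ ⌊X⌋₊, a m * g m
  refine ⟨|T x₀ - c * I x₀ - (A x₀ - c * x₀) * g x₀| + (C + δ * x₀) * g x₀ + ε * |I x₀|,
    fun X hX => ?_⟩
  have hIci : Icc x₀ X ⊆ Ici r := fun t ht => hrx₀.trans ht.1
  have hIoc : ∀ t ∈ Ioc x₀ X, t ∈ Ici r := fun t ht => hIci (Ioc_subset_Icc_self ht)
  have hderiv' : ∀ t ∈ Icc x₀ X, HasDerivAt g (g' t) t := fun t ht => hderiv t (hIci ht)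
  have hidentity := sum_Icc_mul_sub_mul_integral_eq a n₀ c hA hx₀ hX hderiv' (hg'.mono hIci)
  have herror := abs_mul_sub_integral_deriv_mul_le hx₀ hX hδ.le hderiv' (hg'.mono hIci)
    (hg_nonneg X (hrx₀.trans hX))
    (fun t ht => (hderiv t (hIoc t ht)).nonpos_of_antitoneOn_Ici (hIoc t ht) hg_anti)
    (fun t ht => (le_div_iff₀ (hx₀.trans_lt ht.1)).1 (hg'_le t (hIoc t ht)))
    (fun t ht => hC t (hx₀.trans ht.1))
  have hg : ContinuousOn g (Ici r) := HasDerivAt.continuousOn hderiv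
  have hsplit : I X = I x₀ + ∫ t in x₀..X, g t :=
    (intervalIntegral.integral_add_adjacent_intervals
      ((hg.mono Icc_subset_Ici_self).intervalIntegrable_of_Icc hrx₀)
      ((hg.mono hIci).intervalIntegrable_of_Icc hX)).symm
  have htail_nonneg : 0 ≤ ∫ t in x₀..X, g t :=
    intervalIntegral.integral_nonneg hX fun t ht => hg_nonneg t (hIci ht)
  calc |T X - c * I X|
      = |(T x₀ - c * I x₀ - (A x₀ - c * x₀) * g x₀) +
          ((A X - c * X) * g X - ∫ t in Ioc x₀ X, g' t * (A t - c * t))| := by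
        congr 1
        linear_combination hidentity - c * hsplit
    _ ≤ |T x₀ - c * I x₀ - (A x₀ - c * x₀) * g x₀| +
          ((C + δ * x₀) * g x₀ + δ * (1 + K) * ∫ t in x₀..X, g t) :=
        (abs_add_le _ _).trans (add_le_add_right herror _)
    _ ≤ ε * I X + (|T x₀ - c * I x₀ - (A x₀ - c * x₀) * g x₀| + (C + δ * x₀) * g x₀ +
          ε * |I x₀|) := by
        rw [hsplit]
        linarith [mul_le_mul_of_nonneg_right hδK htail_nonneg,
          mul_le_mul_of_nonneg_left (neg_abs_le (I x₀)) hε.le]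

theorem stmt_9_general (r : ℝ) (g g' : ℝ → ℝ) (K c : ℝ)
    (hgpos : ∀ x ∈ Set.Ici r, 0 < g x)
    (hgdec : AntitoneOn g (Set.Ici r))
    (hderiv : ∀ x ∈ Set.Ici r, HasDerivAt g (g' x) x)
    (hg'cont : ContinuousOn g' (Set.Ici r))
    (hg'bound : ∀ x ∈ Set.Ici r, -g' x ≤ K * g x / x)
    (a : ℕ → ℝ)
    (A : ℝ → ℝ) (hA : ∀ X : ℝ, A X = ∑ m ∈ Finset.Icc ⌈r⌉₊ ⌊X⌋₊, a m)
    (hAasymp : (fun X => A X - c * X) =o[atTop] (fun X : ℝ => X)) :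
    ∃ e₁ e₂ : ℝ → ℝ,
      (∀ X : ℝ, r ≤ X →
        ∑ m ∈ Finset.Icc ⌈r⌉₊ ⌊X⌋₊, a m * g m
          = c * (∫ t in r..X, g t) + e₁ X + e₂ X) ∧
      e₁ =o[atTop] (fun X : ℝ => ∫ t in r..X, g t) ∧
      e₂ =O[atTop] (fun _ : ℝ => (1 : ℝ)) := by
  have hg_nonneg : ∀ x ∈ Ici r, 0 ≤ g x := fun x hx => (hgpos x hx).le
  obtain ⟨e₁, e₂, hsplit, he₁, he₂⟩ := exists_isLittleO_add_isBigO_one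
    (monotoneOn_intervalIntegral_of_nonneg (HasDerivAt.continuousOn hderiv) hg_nonneg)
    fun ε hε => (exists_abs_sum_mul_sub_mul_integral_le a ⌈r⌉₊ hg_nonneg hgdec hderiv hg'cont
      hg'bound hA hAasymp hε).imp fun _ hC => eventually_atTop.2 ⟨_, hC⟩
  exact ⟨e₁, e₂, fun X _ => by linarith [hsplit X], he₁, he₂⟩

/-- Abel-summation asymptotics: if `g` is positive, decreasing, continuously
differentiable with `-g'(x) ≤ K·g(x)/x` on `[r,∞)`, and `A(X) = ∑_{r ≤ m ≤ X} a m`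
satisfies `A(X) = c·X + o(X)` with the `a m` nonnegative, then
`∑_{r ≤ m ≤ X} a m · g m = c·∫_r^X g + o(∫_r^X g) + O(1)` as `X → ∞`. -/
theorem stmt_9 (r : ℝ) (g g' : ℝ → ℝ) (K c : ℝ) (hc : 0 < c)
    (hgpos : ∀ x ∈ Set.Ici r, 0 < g x)
    (hgdec : AntitoneOn g (Set.Ici r))
    (hderiv : ∀ x ∈ Set.Ici r, HasDerivAt g (g' x) x)
    (hg'cont : ContinuousOn g' (Set.Ici r))
    (hg'bound : ∀ x ∈ Set.Ici r, -g' x ≤ K * g x / x)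
    (a : ℕ → ℝ) (ha : ∀ m, 0 ≤ a m)
    (A : ℝ → ℝ) (hA : ∀ X : ℝ, A X = ∑ m ∈ Finset.Icc ⌈r⌉₊ ⌊X⌋₊, a m)
    (hAasymp : (fun X => A X - c * X) =o[atTop] (fun X : ℝ => X)) :
    ∃ e₁ e₂ : ℝ → ℝ,
      (∀ X : ℝ, r ≤ X →
        ∑ m ∈ Finset.Icc ⌈r⌉₊ ⌊X⌋₊, a m * g m
          = c * (∫ t in r..X, g t) + e₁ X + e₂ X) ∧
      e₁ =o[atTop] (fun X : ℝ => ∫ t in r..X, g t) ∧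
      e₂ =O[atTop] (fun _ : ℝ => (1 : ℝ)) :=
  stmt_9_general r g g' K c hgpos hgdec hderiv hg'cont hg'bound a A hA hAasymp
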